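/- Given maximal independent sets S₁ of the m₁×n grid graph and S₂ of the m₂×n grid graph, there exists a set T of vertices in the middle column strip such that S₁ ∪ T ∪ S₂' is a maximal independent set of the (m₁+m₂+1)×n grid graph, where S₂' is the translate of S₂ by m₁+1 in the first coordinate. Moreover, the map (S₁, S₂) ↦ the resulting MIS can be chosen injective. -/

import Mathlib

/-- The m×n grid graph on {0,...,m-1}×{0,...,n-1}: edges between points at distance 1. -/
def gridGraph (m n : ℕ) : SimpleGraph (Fin m × Fin n) :=
  SimpleGraph.fromRel (fun u v =>
    (u.1 = v.1 ∧ u.2.1 + 1 = v.2.1) ∨ (u.2 = v.2 ∧ u.1.1 + 1 = v.1.1))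

/-- S is a maximal independent set: independent, and every vertex outside S has a neighbor in S. -/
def IsMaxIndep {V : Type*} (G : SimpleGraph V) (S : Set V) : Prop :=
  (∀ u ∈ S, ∀ v ∈ S, ¬ G.Adj u v) ∧ ∀ v ∉ S, ∃ u ∈ S, G.Adj v u

/-- The number of maximal independent sets of G. -/
noncomputable def numMIS {V : Type*} (G : SimpleGraph V) : ℕ :=
  Nat.card {S : Set V // IsMaxIndep G S}

/-!
Take any maximal independent set `M` of the large grid containing the (independent) union of the
two translated sets `S₁` and `S₂'`. A vertex of the top block outside `S₁` has a neighbour in `S₁`,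
so it cannot lie in `M`; hence `M` meets the top block exactly in `S₁`, the bottom block exactly in
`S₂'`, and the rest of `M` lies on the separating row. Since `S₁` and `S₂` are recovered from `M`
as its preimages under the two block embeddings, the assignment `(S₁, S₂) ↦ M` is injective.
-/

open SimpleGraph Set

section MaxIndep

variable {V W : Type*} {G : SimpleGraph V} {H : SimpleGraph W}

theorem isMaxIndep_iff_maximal_isIndepSet {S : Set V} :
    IsMaxIndep G S ↔ Maximal G.IsIndepSet S := by
  constructor
  · rintro ⟨hind, hdom⟩
    refine ⟨fun u hu v hv _ => hind u hu v hv, fun t ht hSt v hvt => ?_⟩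
    by_contra hvS
    obtain ⟨u, huS, hvu⟩ := hdom v hvS
    exact ht hvt (hSt huS) hvu.ne hvu
  · intro hS
    refine ⟨fun u hu v hv huv => hS.1 hu hv huv.ne huv, fun v hvS => ?_⟩
    by_contra! hnot
    have hins : G.IsIndepSet (insert v S) :=
      hS.1.insert fun u huS _ => ⟨hnot u huS, fun huv => hnot u huS huv.symm⟩
    exact hvS (hS.2 hins (subset_insert v S) (mem_insert v S))

theorem IsMaxIndep.isIndepSet {S : Set V} (hS : IsMaxIndep G S) : G.IsIndepSet S :=
  fun u hu v hv _ => hS.1 u hu v hv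

theorem exists_isMaxIndep_superset {S : Set V} (hS : G.IsIndepSet S) :
    ∃ M, S ⊆ M ∧ IsMaxIndep G M := by
  obtain ⟨M, hSM, hM⟩ := zorn_subset_nonempty {t | G.IsIndepSet t}
    (fun c hc hchain _ => ⟨⋃₀ c, hchain.pairwise_sUnion.mpr hc, fun _ => subset_sUnion_of_mem⟩)
    S hS
  exact ⟨M, hSM, isMaxIndep_iff_maximal_isIndepSet.mpr hM⟩

theorem SimpleGraph.IsIndepSet.image_embedding {S : Set W} (hS : H.IsIndepSet S) (φ : H ↪g G) :
    G.IsIndepSet (φ '' S) :=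
  (φ.injective.injOn.pairwise_image).mpr fun _ hu _ hv huv => by
    simpa only [Function.onFun, φ.map_adj_iff] using hS hu hv huv

theorem IsMaxIndep.preimage_eq {S : Set W} {M : Set V} (hS : IsMaxIndep H S) (φ : H ↪g G)
    (hM : G.IsIndepSet M) (hSM : φ '' S ⊆ M) : φ ⁻¹' M = S := by
  refine Subset.antisymm (fun v hvM => ?_) (image_subset_iff.mp hSM)
  by_contra hvS
  obtain ⟨u, huS, hvu⟩ := hS.2 v hvS
  exact hM hvM (hSM (mem_image_of_mem φ huS)) (φ.injective.ne hvu.ne) (φ.map_adj_iff.mpr hvu)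

theorem exists_isMaxIndep_preimage_eq {W₁ W₂ : Type*} {H₁ : SimpleGraph W₁}
    {H₂ : SimpleGraph W₂} (φ₁ : H₁ ↪g G) (φ₂ : H₂ ↪g G) (hsep : ∀ a b, ¬ G.Adj (φ₁ a) (φ₂ b))
    {S₁ : Set W₁} {S₂ : Set W₂} (h₁ : IsMaxIndep H₁ S₁) (h₂ : IsMaxIndep H₂ S₂) :
    ∃ M, IsMaxIndep G M ∧ φ₁ ⁻¹' M = S₁ ∧ φ₂ ⁻¹' M = S₂ := by
  have hind : G.IsIndepSet (φ₁ '' S₁ ∪ φ₂ '' S₂) := by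
    refine pairwise_union.mpr ⟨IsIndepSet.image_embedding h₁.isIndepSet φ₁,
      IsIndepSet.image_embedding h₂.isIndepSet φ₂, ?_⟩
    rintro _ ⟨a, -, rfl⟩ _ ⟨b, -, rfl⟩ -
    exact ⟨hsep a b, fun h => hsep a b h.symm⟩
  obtain ⟨M, hSM, hM⟩ := exists_isMaxIndep_superset hind
  exact ⟨M, hM, h₁.preimage_eq φ₁ hM.isIndepSet (subset_union_left.trans hSM),
    h₂.preimage_eq φ₂ hM.isIndepSet (subset_union_right.trans hSM)⟩

end MaxIndep

section Grid

variable {m m' n : ℕ}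

theorem gridGraph_adj {u v : Fin m × Fin n} :
    (gridGraph m n).Adj u v ↔
      (u.1.val = v.1.val ∧ (u.2.val + 1 = v.2.val ∨ v.2.val + 1 = u.2.val)) ∨
      (u.2.val = v.2.val ∧ (u.1.val + 1 = v.1.val ∨ v.1.val + 1 = u.1.val)) := by
  simp only [gridGraph, fromRel_adj, ne_eq, Prod.ext_iff, Fin.ext_iff]
  omega

def gridRowShift (k : ℕ) (h : m + k ≤ m') : gridGraph m n ↪g gridGraph m' n where
  toFun v := (⟨k + v.1.val, by omega⟩, v.2)
  inj' := by
    intro u v huv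
    simp only [Prod.mk.injEq, Fin.mk.injEq, add_right_inj] at huv
    exact Prod.ext (Fin.ext huv.1) huv.2
  map_rel_iff' := by
    intro u v
    change (gridGraph m' n).Adj (⟨k + u.1.val, by omega⟩, u.2) (⟨k + v.1.val, by omega⟩, v.2) ↔ _
    simp only [gridGraph_adj]
    omega

theorem gridRowShift_apply (k : ℕ) (h : m + k ≤ m') (v : Fin m × Fin n) :
    gridRowShift k h v = ((⟨k + v.1.val, by omega⟩ : Fin m'), v.2) :=
  rfl

theorem mem_range_gridRowShift_iff (k : ℕ) (h : m + k ≤ m') (v : Fin m' × Fin n) :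
    v ∈ range (gridRowShift k h) ↔ k ≤ v.1.val ∧ v.1.val < k + m := by
  constructor
  · rintro ⟨u, rfl⟩
    simp only [gridRowShift_apply]
    omega
  · rintro ⟨hk, hkm⟩
    refine ⟨(⟨v.1.val - k, by omega⟩, v.2), Prod.ext (Fin.ext ?_) rfl⟩
    simp only [gridRowShift_apply]
    omega

theorem gridRowShift_not_adj {m₁ m₂ k₁ k₂ : ℕ} (h₁ : m₁ + k₁ ≤ m') (h₂ : m₂ + k₂ ≤ m')
    (hgap : k₁ + m₁ < k₂) (a : Fin m₁ × Fin n) (b : Fin m₂ × Fin n) :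
    ¬ (gridGraph m' n).Adj (gridRowShift k₁ h₁ a) (gridRowShift k₂ h₂ b) := by
  simp only [gridRowShift_apply, gridGraph_adj]
  omega

theorem eq_image_preimage_union_gridRowShift {m₁ m₂ : ℕ} (h₁ : m₁ + 0 ≤ m₁ + m₂ + 1)
    (h₂ : m₂ + (m₁ + 1) ≤ m₁ + m₂ + 1) (M : Set (Fin (m₁ + m₂ + 1) × Fin n)) :
    M = gridRowShift 0 h₁ '' (gridRowShift 0 h₁ ⁻¹' M) ∪ {v ∈ M | v.1.val = m₁} ∪
      gridRowShift (m₁ + 1) h₂ '' (gridRowShift (m₁ + 1) h₂ ⁻¹' M) := by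
  ext v
  simp only [image_preimage_eq_inter_range, mem_union, mem_inter_iff, mem_sep_iff,
    mem_range_gridRowShift_iff, ← and_or_left, iff_self_and]
  have := v.1.isLt
  omega

end Grid

theorem mis_adjoin (m₁ m₂ n : ℕ) :
    ∃ f : {S : Set (Fin m₁ × Fin n) // IsMaxIndep (gridGraph m₁ n) S} ×
          {S : Set (Fin m₂ × Fin n) // IsMaxIndep (gridGraph m₂ n) S} →
          {S : Set (Fin (m₁ + m₂ + 1) × Fin n) // IsMaxIndep (gridGraph (m₁ + m₂ + 1) n) S},
      Function.Injective f ∧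
      ∀ p, ∃ T : Set (Fin (m₁ + m₂ + 1) × Fin n),
        (∀ v ∈ T, v.1.val = m₁) ∧
        (f p).val =
          (fun v : Fin m₁ × Fin n => ((Fin.castLE (by omega) v.1 : Fin (m₁ + m₂ + 1)), v.2)) '' p.1.val
          ∪ T ∪
          (fun v : Fin m₂ × Fin n =>
            ((⟨m₁ + 1 + v.1.val, by have := v.1.isLt; omega⟩ : Fin (m₁ + m₂ + 1)), v.2)) '' p.2.val := by
  have h₁ : m₁ + 0 ≤ m₁ + m₂ + 1 := by omega
  have h₂ : m₂ + (m₁ + 1) ≤ m₁ + m₂ + 1 := by omega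
  have glue (p : {S : Set (Fin m₁ × Fin n) // IsMaxIndep (gridGraph m₁ n) S} ×
      {S : Set (Fin m₂ × Fin n) // IsMaxIndep (gridGraph m₂ n) S}) :=
    exists_isMaxIndep_preimage_eq (gridRowShift 0 h₁) (gridRowShift (m₁ + 1) h₂)
      (gridRowShift_not_adj h₁ h₂ (by omega)) p.1.2 p.2.2
  choose M hM htop hbot using glue
  refine ⟨fun p => ⟨M p, hM p⟩, fun p q hpq => ?_,
    fun p => ⟨{v ∈ M p | v.1.val = m₁}, fun v hv => hv.2, ?_⟩⟩
  · have hMpq : M p = M q := congrArg Subtype.val hpq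
    exact Prod.ext (Subtype.ext <| by rw [← htop p, ← htop q, hMpq])
      (Subtype.ext <| by rw [← hbot p, ← hbot q, hMpq])
  · rw [← htop p, ← hbot p]
    convert eq_image_preimage_union_gridRowShift h₁ h₂ (M p) using 4 <;>
      simp [gridRowShift_apply, Fin.ext_iff]
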